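/- Let d ≥ 1 and let Z = {z_1, …, z_N} be an N-point multiset on S^d. Then the squared L² hemisphere discrepancy satisfies [D_{L²,hem}(Z)]² = (1/2) · ( ∬_{S^d×S^d} d(x,y) dσ(x)dσ(y) − (1/N²) Σ_{i,j=1}^N d(z_i, z_j) ), where moreover ∬_{S^d×S^d} d(x,y) dσ(x)dσ(y) = 1/2. -/

import Mathlib

open MeasureTheory Metric Set
open scoped RealInnerProductSpace ENNReal

noncomputable section

/-- The unit sphere `S^d` in `ℝ^(d+1)`, realized as `EuclideanSpace ℝ (Fin (d+1))`. -/
abbrev Sphere (d : ℕ) : Type _ := Metric.sphere (0 : EuclideanSpace ℝ (Fin (d + 1))) 1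

/-- The uniform probability measure `σ` on `S^d` (the normalized surface measure):
the normalization of the cone (surface) measure associated to the Lebesgue measure. -/
def sphereMeasure (d : ℕ) : Measure (Sphere d) :=
  ((volume : Measure (EuclideanSpace ℝ (Fin (d + 1)))).toSphere univ)⁻¹ •
    (volume : Measure (EuclideanSpace ℝ (Fin (d + 1)))).toSphere

/-- Euclidean inner product `x · y` of two points on the sphere. -/
def ip {d : ℕ} (x y : Sphere d) : ℝ :=
  ⟪(x : EuclideanSpace ℝ (Fin (d + 1))), (y : EuclideanSpace ℝ (Fin (d + 1)))⟫

/-- Euclidean distance `‖x - y‖` between two points on the sphere. -/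
def eucl {d : ℕ} (x y : Sphere d) : ℝ :=
  ‖(x : EuclideanSpace ℝ (Fin (d + 1))) - (y : EuclideanSpace ℝ (Fin (d + 1)))‖

/-- The normalized geodesic distance `d(x,y) = arccos(x·y)/π` on the sphere. -/
def geo {d : ℕ} (x y : Sphere d) : ℝ := Real.arccos (ip x y) / Real.pi

/-- The open spherical cap `C(x,t) = {z ∈ S^d : z · x > t}`. -/
def cap {d : ℕ} (x : Sphere d) (t : ℝ) : Set (Sphere d) := {z | t < ip x z}

/-- The open hemisphere `H(x) = {z ∈ S^d : z · x > 0}`. -/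
def hemi {d : ℕ} (x : Sphere d) : Set (Sphere d) := {z | 0 < ip x z}

/-!
The lune `H(x) \ H(z)` has measure `d(x, z) / 2`. Two reflections carry any pair of points of the
sphere to any other pair with the same inner product, so the measure of the lune depends only on the
angle `θ = arccos (x · z)`. As a function of `θ` it is nonnegative and additive on `[0, π]` (three
points on a great circle split a lune into two lunes, up to a null great sphere), and it equals
`1 / 2` at `θ = π`; hence it is `θ / (2π)`. Therefore `σ(H(x) ∩ H(z)) = 1/2 - d(x, z)/2`, and the
identity follows by expanding the square in the discrepancy, using `1_{H(x)}(z) = 1_{H(z)}(x)`, and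
integrating in `x`. Finally `y ↦ -y` preserves `σ` and turns `d(x, y)` into `1 - d(x, y)`, so
`∫ d(x, y) dσ(y) = 1/2`.
-/

open Real
open scoped Pointwise

section AdditiveOnInterval

variable {f : ℝ → ℝ} {L : ℝ}
  (hadd : ∀ a b, 0 ≤ a → 0 ≤ b → a + b ≤ L → f (a + b) = f a + f b)
  (hnonneg : ∀ a, 0 ≤ a → a ≤ L → 0 ≤ f a)
include hadd

lemma map_natCast_mul_of_additiveOn (n : ℕ) {t : ℝ} (ht : 0 ≤ t) (hnt : n * t ≤ L) :
    f (n * t) = n * f t := by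
  induction n with
  | zero => simpa using hadd 0 0 le_rfl le_rfl (by simpa using hnt)
  | succ n ih =>
    push_cast at hnt ⊢
    have hn : (n : ℝ) * t ≤ L := by nlinarith
    rw [add_one_mul, hadd _ _ (by positivity) ht (by linarith), ih hn, add_one_mul]

lemma map_div_natCast_of_additiveOn (hL : 0 ≤ L) {n : ℕ} (hn : n ≠ 0) :
    f (L / n) = f L / n := by
  have hn' : (n : ℝ) ≠ 0 := Nat.cast_ne_zero.2 hn
  have hnL : (n : ℝ) * (L / n) = L := by field_simp
  have h := map_natCast_mul_of_additiveOn hadd n (t := L / n) (by positivity) hnL.le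
  rw [hnL] at h
  rw [h]
  field_simp

include hnonneg

lemma monotoneOn_of_additiveOn : MonotoneOn f (Icc 0 L) := by
  intro a ha b hb hab
  have h := hadd a (b - a) ha.1 (by linarith) (by linarith [hb.2])
  rw [add_sub_cancel] at h
  linarith [hnonneg (b - a) (by linarith) (by linarith [ha.1, hb.2])]

lemma abs_sub_le_of_additiveOn (hL : 0 < L) {θ : ℝ} (hθ : θ ∈ Icc 0 L) {n : ℕ} (hn : n ≠ 0) :
    |f θ - f L / L * θ| ≤ f L / n := by
  set t := L / n with ht_def
  have ht : 0 < t := div_pos hL (Nat.cast_pos.2 (Nat.pos_of_ne_zero hn))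
  have htL : t ≤ L := div_le_self hL.le (Nat.one_le_cast.2 (Nat.one_le_iff_ne_zero.2 hn))
  have hft : f t = f L / n := map_div_natCast_of_additiveOn hadd hL.le hn
  -- write `θ = k t + r` with `0 ≤ r < t`; then `k f(t) ≤ f(θ) ≤ (k + 1) f(t)`, and likewise for the
  -- linear function `θ ↦ f(L) / L * θ`, which also takes the value `f(t)` at `t`
  set k := ⌊θ / t⌋₊
  have hk_le : (k : ℝ) * t ≤ θ := (le_div_iff₀ ht).1 (Nat.floor_le (div_nonneg hθ.1 ht.le))
  have hk_lt : θ < (k + 1) * t := (div_lt_iff₀ ht).1 (Nat.lt_floor_add_one _)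
  have hkt : 0 ≤ (k : ℝ) * t := by positivity
  have hfθ : f θ = k * f t + f (θ - k * t) := by
    rw [← map_natCast_mul_of_additiveOn hadd k ht.le (hk_le.trans hθ.2),
      ← hadd _ _ hkt (by linarith) (by linarith [hθ.2]), add_sub_cancel]
  have hfr : f (θ - k * t) ≤ f t :=
    monotoneOn_of_additiveOn hadd hnonneg ⟨by linarith, by linarith [hθ.2]⟩ ⟨ht.le, htL⟩
      (by linarith)
  have hfr₀ : 0 ≤ f (θ - k * t) := hnonneg _ (by linarith) (by linarith [hθ.2])
  have hlin : f L / L * θ = f t / t * θ := by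
    rw [hft, ht_def]
    field_simp
  have hft₀ : 0 ≤ f t := hnonneg t ht.le htL
  have h₁ : (k : ℝ) * f t ≤ f t / t * θ := by
    rw [div_mul_eq_mul_div, le_div_iff₀ ht]; nlinarith
  have h₂ : f t / t * θ ≤ (k + 1) * f t := by
    rw [div_mul_eq_mul_div, div_le_iff₀ ht]; nlinarith
  rw [abs_le, hfθ, hlin, ← hft]
  constructor <;> linarith

open Filter Topology in
lemma eq_div_mul_of_additiveOn (hL : 0 < L) {θ : ℝ} (hθ : θ ∈ Icc 0 L) :
    f θ = f L / L * θ := by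
  have hlim : Tendsto (fun n : ℕ => f L / n) atTop (𝓝 0) :=
    tendsto_const_div_atTop_nhds_zero_nat (f L)
  have h := ge_of_tendsto hlim <| eventually_atTop.2
    ⟨1, fun n hn => abs_sub_le_of_additiveOn hadd hnonneg hL hθ (Nat.one_le_iff_ne_zero.1 hn)⟩
  exact sub_eq_zero.1 (abs_nonpos_iff.1 h)

end AdditiveOnInterval

lemma exists_linearIsometryEquiv_apply_eq_pair {F : Type*} [NormedAddCommGroup F]
    [InnerProductSpace ℝ F] {x z x' z' : F} (hx : ‖x‖ = ‖x'‖) (hz : ‖z‖ = ‖z'‖)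
    (hxz : ⟪x, z⟫ = ⟪x', z'⟫) : ∃ e : F ≃ₗᵢ[ℝ] F, e x = x' ∧ e z = z' := by
  set e₁ := (ℝ ∙ (x - x'))ᗮ.reflection
  have he₁x : e₁ x = x' := Submodule.reflection_sub hx
  set e₂ := (ℝ ∙ (e₁ z - z'))ᗮ.reflection
  have he₂z : e₂ (e₁ z) = z' := Submodule.reflection_sub (by rw [e₁.norm_map, hz])
  have he₁z : ⟪e₁ z, x'⟫ = ⟪z', x'⟫ := by
    have := e₁.inner_map_map z x
    rw [he₁x] at this
    rw [this, real_inner_comm, hxz, real_inner_comm]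
  have he₂x' : e₂ x' = x' := by
    refine Submodule.reflection_mem_subspace_eq_self ?_
    rw [Submodule.mem_orthogonal_singleton_iff_inner_right, inner_sub_left, he₁z, sub_self]
  exact ⟨e₁.trans e₂, by simp [he₁x, he₂x'], he₂z⟩

lemma measureReal_eq_of_subset_of_subset_union_null {α : Type*} [MeasurableSpace α]
    {μ : Measure α} {s t n : Set α} (hst : s ⊆ t) (hts : t ⊆ s ∪ n) (hn : μ n = 0) :
    μ.real s = μ.real t :=
  measureReal_congr <| (ae_le_set.2 (by simp [sdiff_eq_empty.2 hst])).antisymm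
    (ae_le_set.2 (measure_mono_null (sdiff_subset_iff.2 hts) hn))

section SphereIsometry

variable {E : Type*} [NormedAddCommGroup E] [InnerProductSpace ℝ E]

def LinearIsometryEquiv.sphereHomeomorph (e : E ≃ₗᵢ[ℝ] E) : sphere (0 : E) 1 ≃ₜ sphere (0 : E) 1 :=
  e.toHomeomorph.subtype fun x => by simp

lemma LinearIsometryEquiv.image_coe_preimage_sphereHomeomorph (e : E ≃ₗᵢ[ℝ] E)
    (s : Set (sphere (0 : E) 1)) :
    ((↑) : sphere (0 : E) 1 → E) '' (e.sphereHomeomorph ⁻¹' s) = e ⁻¹' ((↑) '' s) := by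
  ext x
  simp only [mem_image, mem_preimage, Subtype.exists, mem_sphere_iff_norm, sub_zero,
    exists_and_right, exists_eq_right, LinearIsometryEquiv.norm_map]
  rfl

variable [MeasurableSpace E] [BorelSpace E]

lemma LinearIsometryEquiv.measurePreserving_sphereHomeomorph (e : E ≃ₗᵢ[ℝ] E) {μ : Measure E}
    (he : MeasurePreserving e μ μ) :
    MeasurePreserving e.sphereHomeomorph μ.toSphere μ.toSphere := by
  refine ⟨e.sphereHomeomorph.measurable, Measure.ext fun s hs => ?_⟩
  rw [Measure.map_apply e.sphereHomeomorph.measurable hs,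
    Measure.toSphere_apply' _ (hs.preimage e.sphereHomeomorph.measurable),
    Measure.toSphere_apply' _ hs, image_coe_preimage_sphereHomeomorph]
  have preimage_eq_image_symm : ∀ t : Set E, e ⁻¹' t = e.symm '' t := fun t =>
    (e.symm.image_eq_preimage_symm t).symm
  have : Ioo (0 : ℝ) 1 • (e ⁻¹' ((↑) '' s)) = e ⁻¹' (Ioo (0 : ℝ) 1 • ((↑) '' s)) := by
    simp [preimage_eq_image_symm, ← image2_smul, image_image2, image2_image_right]
  rw [this, he.measure_preimage_emb e.toHomeomorph.measurableEmbedding]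

lemma Measure.toSphere_preimage_coe_submodule [FiniteDimensional ℝ E] (μ : Measure E)
    [μ.IsAddHaarMeasure] {W : Submodule ℝ E} (hW : W ≠ ⊤) :
    μ.toSphere (((↑) : sphere (0 : E) 1 → E) ⁻¹' W) = 0 := by
  have hmeas : MeasurableSet (((↑) : sphere (0 : E) 1 → E) ⁻¹' W) :=
    (W.closed_of_finiteDimensional.preimage continuous_subtype_val).measurableSet
  rw [Measure.toSphere_apply' _ hmeas, Measure.addHaar_submodule μ W hW |> measure_mono_null ?_,
    mul_zero]
  rintro _ ⟨r, -, _, ⟨y, hy, rfl⟩, rfl⟩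
  exact W.smul_mem r hy

end SphereIsometry

variable {d : ℕ}

local notation "𝔼" => EuclideanSpace ℝ (Fin (d + 1))

instance : IsProbabilityMeasure (sphereMeasure d) := by
  have : NeZero (volume : Measure 𝔼).toSphere := ⟨Measure.toSphere_ne_zero _⟩
  unfold sphereMeasure
  infer_instance

lemma LinearIsometryEquiv.measurePreserving_sphereMeasure (e : 𝔼 ≃ₗᵢ[ℝ] 𝔼) :
    MeasurePreserving e.sphereHomeomorph (sphereMeasure d) (sphereMeasure d) :=
  (e.measurePreserving_sphereHomeomorph e.measurePreserving).smul_measure _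

lemma ip_comm (x y : Sphere d) : ip x y = ip y x := real_inner_comm _ _

lemma ip_mem_Icc (x y : Sphere d) : ip x y ∈ Icc (-1) 1 := by
  refine abs_le.1 ?_
  simpa [ip] using abs_real_inner_le_norm (x : 𝔼) y

lemma ip_sphereHomeomorph (e : 𝔼 ≃ₗᵢ[ℝ] 𝔼) (x y : Sphere d) :
    ip (e.sphereHomeomorph x) (e.sphereHomeomorph y) = ip x y :=
  e.inner_map_map x y

lemma continuous_ip_right (x : Sphere d) : Continuous (ip x) :=
  continuous_const.inner continuous_subtype_val

lemma mem_hemi {x y : Sphere d} : y ∈ hemi x ↔ 0 < ip x y := Iff.rfl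

lemma measurableSet_hemi (x : Sphere d) : MeasurableSet (hemi x) :=
  (isOpen_lt continuous_const (continuous_ip_right x)).measurableSet

lemma preimage_hemi_sphereHomeomorph (e : 𝔼 ≃ₗᵢ[ℝ] 𝔼) (x : Sphere d) :
    e.sphereHomeomorph ⁻¹' hemi (e.sphereHomeomorph x) = hemi x := by
  ext y
  simp [hemi, ip_sphereHomeomorph]

lemma sphereMeasure_ip_eq_zero (x : Sphere d) : sphereMeasure d {y | ip x y = 0} = 0 := by
  have hW : (ℝ ∙ (x : 𝔼))ᗮ ≠ ⊤ := by
    simp [Submodule.orthogonal_eq_top_iff, ne_zero_of_mem_unit_sphere]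
  have hset : {y : Sphere d | ip x y = 0} = (↑) ⁻¹' ((ℝ ∙ (x : 𝔼))ᗮ : Set 𝔼) := by
    ext y
    simp [ip, Submodule.mem_orthogonal_singleton_iff_inner_right]
  simp [sphereMeasure, hset, Measure.toSphere_preimage_coe_submodule volume hW]

def antipode : Sphere d ≃ₜ Sphere d := (LinearIsometryEquiv.neg ℝ).sphereHomeomorph

lemma ip_antipode (x y : Sphere d) : ip x (antipode y) = -ip x y :=
  inner_neg_right _ _

lemma measurePreserving_antipode :
    MeasurePreserving (antipode (d := d)) (sphereMeasure d) (sphereMeasure d) :=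
  LinearIsometryEquiv.measurePreserving_sphereMeasure _

lemma measureReal_hemi (x : Sphere d) : (sphereMeasure d).real (hemi x) = 1 / 2 := by
  have hcompl :
      (sphereMeasure d).real (antipode ⁻¹' hemi x) = (sphereMeasure d).real (hemi x)ᶜ := by
    refine measureReal_eq_of_subset_of_subset_union_null (n := {y | ip x y = 0}) (fun y hy => ?_)
      (fun y hy => ?_) (sphereMeasure_ip_eq_zero x)
    · rw [mem_preimage, mem_hemi, ip_antipode] at hy
      rw [mem_compl_iff, mem_hemi, not_lt]
      linarith
    · rw [mem_compl_iff, mem_hemi, not_lt] at hy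
      rw [mem_union, mem_preimage, mem_hemi, ip_antipode]
      rcases hy.lt_or_eq with h | h
      · exact .inl (by linarith)
      · exact .inr h
  rw [measurePreserving_antipode.measureReal_preimage
    (measurableSet_hemi x).nullMeasurableSet, probReal_compl_eq_one_sub (measurableSet_hemi x)]
    at hcompl
  linarith

lemma measureReal_hemi_diff_hemi_congr {x z x' z' : Sphere d} (h : ip x z = ip x' z') :
    (sphereMeasure d).real (hemi x \ hemi z) = (sphereMeasure d).real (hemi x' \ hemi z') := by
  obtain ⟨e, hx, hz⟩ := exists_linearIsometryEquiv_apply_eq_pair (x := (x : 𝔼)) (z := z)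
    (x' := x') (z' := z') (by simp) (by simp) h
  obtain rfl : e.sphereHomeomorph x = x' := Subtype.ext hx
  obtain rfl : e.sphereHomeomorph z = z' := Subtype.ext hz
  rw [← preimage_hemi_sphereHomeomorph e x, ← preimage_hemi_sphereHomeomorph e z, ← preimage_sdiff,
    e.measurePreserving_sphereMeasure.measureReal_preimage
      ((measurableSet_hemi _).diff (measurableSet_hemi _)).nullMeasurableSet]

lemma Fin.zero_ne_last_of_one_le (hd : 1 ≤ d) : (0 : Fin (d + 1)) ≠ Fin.last d := by
  simp [Fin.ext_iff]; omega

def greatCircle (hd : 1 ≤ d) (θ : ℝ) : Sphere d :=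
  ⟨cos θ • EuclideanSpace.single 0 1 + sin θ • EuclideanSpace.single (Fin.last d) 1, by
    have horth : ⟪cos θ • EuclideanSpace.single (0 : Fin (d + 1)) (1 : ℝ),
        sin θ • EuclideanSpace.single (Fin.last d) (1 : ℝ)⟫ = 0 := by
      simp [real_inner_smul_left, real_inner_smul_right, EuclideanSpace.inner_single_left,
        (Fin.zero_ne_last_of_one_le hd).symm]
    rw [mem_sphere_zero_iff_norm, ← pow_eq_one_iff_of_nonneg (norm_nonneg _) two_ne_zero,
      norm_add_sq_real, horth]
    simp [norm_smul]⟩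

section Lune

variable {hd : 1 ≤ d}

lemma ip_greatCircle (θ : ℝ) (y : Sphere d) :
    ip (greatCircle hd θ) y = cos θ * y.1 0 + sin θ * y.1 (Fin.last d) := by
  simp [ip, greatCircle, inner_add_left, real_inner_smul_left, EuclideanSpace.inner_single_left]

lemma ip_greatCircle_greatCircle (a b : ℝ) :
    ip (greatCircle hd a) (greatCircle hd b) = cos (a - b) := by
  rw [ip_greatCircle]
  simp [greatCircle, Fin.zero_ne_last_of_one_le hd, (Fin.zero_ne_last_of_one_le hd).symm,
    Real.cos_sub]

lemma sin_mul_ip_greatCircle_add (a b : ℝ) (y : Sphere d) :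
    sin a * ip (greatCircle hd (a + b)) y + sin b * ip (greatCircle hd 0) y =
      sin (a + b) * ip (greatCircle hd a) y := by
  have hb : sin b = sin (a + b) * cos a - cos (a + b) * sin a := by
    rw [← Real.sin_sub, add_sub_cancel_left]
  simp only [ip_greatCircle, hb, Real.cos_zero, Real.sin_zero]
  ring

lemma union_hemi_diff_hemi_subset {a b : ℝ} (ha : 0 < a) (hb : 0 < b) (hab : a + b ≤ π) :
    hemi (greatCircle hd 0) \ hemi (greatCircle hd a) ∪
        hemi (greatCircle hd a) \ hemi (greatCircle hd (a + b)) ⊆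
      hemi (greatCircle hd 0) \ hemi (greatCircle hd (a + b)) ∪
        {y | ip (greatCircle hd 0) y = 0} := by
  have hsa : 0 < sin a := Real.sin_pos_of_pos_of_lt_pi ha (by linarith)
  have hsb : 0 < sin b := Real.sin_pos_of_pos_of_lt_pi hb (by linarith)
  have hsab : 0 ≤ sin (a + b) := Real.sin_nonneg_of_nonneg_of_le_pi (by linarith) hab
  intro y hy
  have key := sin_mul_ip_greatCircle_add (hd := hd) a b y
  simp only [mem_union, mem_sdiff, mem_hemi, not_lt] at hy ⊢
  rcases hy with ⟨hx, hz⟩ | ⟨hz, hw⟩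
  · exact .inl ⟨hx, by nlinarith [mul_nonpos_of_nonneg_of_nonpos hsab hz, mul_pos hsb hx]⟩
  · have : 0 ≤ ip (greatCircle hd 0) y := by
      nlinarith [mul_nonneg hsab hz.le, mul_nonpos_of_nonneg_of_nonpos hsa.le hw]
    rcases this.lt_or_eq with h | h
    exacts [.inl ⟨h, hw⟩, .inr h.symm]

variable (hd) in
def luneMeasure (θ : ℝ) : ℝ :=
  (sphereMeasure d).real (hemi (greatCircle hd 0) \ hemi (greatCircle hd θ))

lemma measureReal_hemi_diff_hemi_eq_luneMeasure (x z : Sphere d) :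
    (sphereMeasure d).real (hemi x \ hemi z) = luneMeasure hd (Real.arccos (ip x z)) := by
  refine measureReal_hemi_diff_hemi_congr ?_
  rw [ip_greatCircle_greatCircle, zero_sub, Real.cos_neg,
    Real.cos_arccos (ip_mem_Icc x z).1 (ip_mem_Icc x z).2]

lemma luneMeasure_nonneg (θ : ℝ) : 0 ≤ luneMeasure hd θ := measureReal_nonneg

lemma luneMeasure_zero : luneMeasure hd 0 = 0 := by
  simp [luneMeasure]

lemma luneMeasure_pi : luneMeasure hd π = 1 / 2 := by
  have : hemi (greatCircle hd 0) \ hemi (greatCircle hd π) = hemi (greatCircle hd 0) := by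
    refine sdiff_eq_left.2 (disjoint_left.2 fun y hy hy' => ?_)
    rw [mem_hemi, ip_greatCircle] at hy hy'
    simp only [Real.cos_zero, Real.sin_zero, Real.cos_pi, Real.sin_pi] at hy hy'
    linarith
  rw [luneMeasure, this, measureReal_hemi]

lemma luneMeasure_add {a b : ℝ} (ha : 0 ≤ a) (hb : 0 ≤ b) (hab : a + b ≤ π) :
    luneMeasure hd (a + b) = luneMeasure hd a + luneMeasure hd b := by
  rcases ha.eq_or_lt with rfl | ha
  · rw [zero_add, luneMeasure_zero, zero_add]
  rcases hb.eq_or_lt with rfl | hb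
  · rw [add_zero, luneMeasure_zero, add_zero]
  have hB : (sphereMeasure d).real (hemi (greatCircle hd a) \ hemi (greatCircle hd (a + b))) =
      luneMeasure hd b := by
    refine measureReal_hemi_diff_hemi_congr ?_
    rw [ip_greatCircle_greatCircle, ip_greatCircle_greatCircle, sub_add_cancel_left, zero_sub]
  have hcover : (sphereMeasure d).real (hemi (greatCircle hd 0) \ hemi (greatCircle hd (a + b))) =
      (sphereMeasure d).real (hemi (greatCircle hd 0) \ hemi (greatCircle hd a) ∪
        hemi (greatCircle hd a) \ hemi (greatCircle hd (a + b))) := by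
    refine measureReal_eq_of_subset_of_subset_union_null (fun y hy => ?_)
      (union_hemi_diff_hemi_subset ha hb hab) (sphereMeasure_ip_eq_zero (greatCircle hd 0))
    by_cases hz : y ∈ hemi (greatCircle hd a)
    exacts [.inr ⟨hz, hy.2⟩, .inl ⟨hy.1, hz⟩]
  rw [luneMeasure, hcover, measureReal_union (disjoint_left.2 fun y hy hy' => hy.2 hy'.1)
    ((measurableSet_hemi _).diff (measurableSet_hemi _)), hB]
  rfl

lemma luneMeasure_eq {θ : ℝ} (hθ : θ ∈ Icc 0 π) : luneMeasure hd θ = θ / (2 * π) := by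
  rw [eq_div_mul_of_additiveOn (fun a b ha hb hab => luneMeasure_add ha hb hab)
    (fun a _ _ => luneMeasure_nonneg a) Real.pi_pos hθ, luneMeasure_pi]
  ring

end Lune

lemma measureReal_hemi_diff_hemi (hd : 1 ≤ d) (x z : Sphere d) :
    (sphereMeasure d).real (hemi x \ hemi z) = geo x z / 2 := by
  rw [measureReal_hemi_diff_hemi_eq_luneMeasure (hd := hd),
    luneMeasure_eq ⟨Real.arccos_nonneg _, Real.arccos_le_pi _⟩, geo]
  ring

lemma measureReal_hemi_inter_hemi (hd : 1 ≤ d) (x z : Sphere d) :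
    (sphereMeasure d).real (hemi x ∩ hemi z) = 1 / 2 - geo x z / 2 := by
  rw [← measureReal_hemi x, ← measureReal_hemi_diff_hemi hd x z,
    ← measureReal_inter_add_sdiff (s := hemi x) (measurableSet_hemi z)]
  ring

lemma geo_antipode (x y : Sphere d) : geo x (antipode y) = 1 - geo x y := by
  rw [geo, geo, ip_antipode, Real.arccos_neg]
  field_simp

lemma continuous_geo_right (x : Sphere d) : Continuous (geo x) :=
  (Real.continuous_arccos.comp (continuous_ip_right x)).div_const _

lemma integrable_geo_right (x : Sphere d) : Integrable (geo x) (sphereMeasure d) :=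
  (continuous_geo_right x).integrable_of_hasCompactSupport (.of_compactSpace _)

lemma integral_geo_right (x : Sphere d) : ∫ y, geo x y ∂(sphereMeasure d) = 1 / 2 := by
  have h := measurePreserving_antipode.integral_comp antipode.measurableEmbedding (geo x)
  simp only [geo_antipode] at h
  rw [integral_sub (integrable_const 1) (integrable_geo_right x), integral_const] at h
  simp only [probReal_univ, smul_eq_mul, mul_one] at h
  linarith

lemma integral_integral_geo : ∫ x, ∫ y, geo x y ∂(sphereMeasure d) ∂(sphereMeasure d) = 1 / 2 := by
  simp [integral_geo_right]

lemma indicator_hemi_comm (x y : Sphere d) :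
    (hemi x).indicator (1 : Sphere d → ℝ) y = (hemi y).indicator 1 x := by
  simp [indicator, mem_hemi, ip_comm]

lemma integrable_indicator_hemi_inter (x y : Sphere d) :
    Integrable ((hemi x ∩ hemi y).indicator (1 : Sphere d → ℝ)) (sphereMeasure d) :=
  (integrable_const 1).indicator ((measurableSet_hemi x).inter (measurableSet_hemi y))

section HemisphereCount

variable {ι : Type*} [Fintype ι] (z : ι → Sphere d)

lemma integrable_sum_indicator_hemi :
    Integrable (fun x => ∑ j, (hemi (z j)).indicator (1 : Sphere d → ℝ) x) (sphereMeasure d) :=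
  integrable_finsetSum _ fun _ _ => (integrable_const 1).indicator (measurableSet_hemi _)

lemma integral_sum_indicator_hemi :
    ∫ x, ∑ j, (hemi (z j)).indicator (1 : Sphere d → ℝ) x ∂(sphereMeasure d) =
      Fintype.card ι / 2 := by
  rw [integral_finsetSum _ fun j _ => (integrable_const 1).indicator (measurableSet_hemi _)]
  simp [integral_indicator_one (measurableSet_hemi _), measureReal_hemi, div_eq_mul_inv]

lemma sq_sum_indicator_hemi (x : Sphere d) :
    (∑ j, (hemi (z j)).indicator (1 : Sphere d → ℝ) x) ^ 2 =
      ∑ i, ∑ j, (hemi (z i) ∩ hemi (z j)).indicator 1 x := by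
  simp [sq, Finset.sum_mul_sum, inter_indicator_one]

lemma integrable_sq_sum_indicator_hemi :
    Integrable (fun x => (∑ j, (hemi (z j)).indicator (1 : Sphere d → ℝ) x) ^ 2)
      (sphereMeasure d) := by
  simp only [sq_sum_indicator_hemi]
  exact integrable_finsetSum _ fun i _ => integrable_finsetSum _ fun j _ =>
    integrable_indicator_hemi_inter (z i) (z j)

lemma integral_sq_sum_indicator_hemi (hd : 1 ≤ d) :
    ∫ x, (∑ j, (hemi (z j)).indicator (1 : Sphere d → ℝ) x) ^ 2 ∂(sphereMeasure d) =
      Fintype.card ι ^ 2 / 2 - (∑ i, ∑ j, geo (z i) (z j)) / 2 := by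
  simp only [sq_sum_indicator_hemi]
  rw [integral_finsetSum _ fun i _ => integrable_finsetSum _ fun j _ =>
    integrable_indicator_hemi_inter (z i) (z j)]
  simp_rw [integral_finsetSum _ fun j _ => integrable_indicator_hemi_inter (z _) (z j),
    integral_indicator_one ((measurableSet_hemi _).inter (measurableSet_hemi _)),
    measureReal_hemi_inter_hemi hd, Finset.sum_sub_distrib, ← Finset.sum_div]
  simp only [Finset.sum_const, Finset.card_univ, nsmul_eq_mul]
  ring

end HemisphereCount

theorem stolarsky_hemisphere_general (d N : ℕ) (hd : 1 ≤ d) (z : Fin N → Sphere d) :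
    (∫ x, |(1 / N : ℝ) * ∑ j, Set.indicator (hemi x) (1 : Sphere d → ℝ) (z j) - 1 / 2| ^ 2
        ∂(sphereMeasure d))
      = 1 / 2 * ((∫ x, ∫ y, geo x y ∂(sphereMeasure d) ∂(sphereMeasure d))
          - (1 / (N : ℝ) ^ 2) * ∑ i, ∑ j, geo (z i) (z j))
    ∧ (∫ x, ∫ y, geo x y ∂(sphereMeasure d) ∂(sphereMeasure d)) = 1 / 2 := by
  refine ⟨?_, integral_integral_geo⟩
  set c : ℝ := 1 / N
  set S : Sphere d → ℝ := fun x => ∑ j, (hemi (z j)).indicator 1 x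
  have hpt : ∀ x, |c * ∑ j, (hemi x).indicator (1 : Sphere d → ℝ) (z j) - 1 / 2| ^ 2 =
      c ^ 2 * S x ^ 2 - c * S x + 1 / 4 := fun x => by
    simp only [S, indicator_hemi_comm x, sq_abs]
    ring
  -- `c * N` is `1`, or `0` when `N = 0`
  have hcN : (c * N) ^ 2 = c * N := by
    rcases eq_or_ne (N : ℝ) 0 with h | h <;> simp [c, h]
  have hS := integrable_sum_indicator_hemi z
  have hS2 := integrable_sq_sum_indicator_hemi z
  simp_rw [hpt]
  rw [integral_add ?_ (integrable_const _), integral_sub (hS2.const_mul _) (hS.const_mul _),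
    integral_const_mul, integral_const_mul, integral_sq_sum_indicator_hemi z hd,
    integral_sum_indicator_hemi, integral_const, integral_integral_geo]
  · simp only [Fintype.card_fin, probReal_univ, smul_eq_mul]
    linear_combination (1 / 2 : ℝ) * hcN
  · exact (hS2.const_mul _).sub (hS.const_mul _)

/-- **Stolarsky principle for hemispheres**: the squared `L²` hemisphere discrepancy of an
`N`-point configuration equals one half of the difference between the continuous and discrete
geodesic distance energies; moreover `∬ d(x,y) dσ dσ = 1/2`. -/
theorem stolarsky_hemisphere (d N : ℕ) (hd : 1 ≤ d) (hN : 1 ≤ N) (z : Fin N → Sphere d) :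
    (∫ x, |(1 / N : ℝ) * ∑ j, Set.indicator (hemi x) (1 : Sphere d → ℝ) (z j) - 1 / 2| ^ 2
        ∂(sphereMeasure d))
      = 1 / 2 * ((∫ x, ∫ y, geo x y ∂(sphereMeasure d) ∂(sphereMeasure d))
          - (1 / (N : ℝ) ^ 2) * ∑ i, ∑ j, geo (z i) (z j))
    ∧ (∫ x, ∫ y, geo x y ∂(sphereMeasure d) ∂(sphereMeasure d)) = 1 / 2 :=
  stolarsky_hemisphere_general d N hd z
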